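/- Let 0 < t ≤ dim_H Λ_A. If F_i ∈ 𝒢^t(Σ_A) for all i ∈ ℕ, then M_∞^t((⋂_{i=1}^∞ F_i) ∩ U) = M_∞^t(U) for every open set U ⊆ Σ_A; in particular ⋂_{i=1}^∞ F_i ∈ 𝒢^t(Σ_A). -/

import Mathlib

open Set Filter Topology
open scoped ENNReal NNReal

noncomputable section

/-- Euclidean space `ℝ^N`. -/
abbrev Euc (N : ℕ) := EuclideanSpace ℝ (Fin N)

/-- The data and standing assumptions of a conformal graph directed Markov system:
a transitive subshift of finite type over the alphabet `Fin q`, a compact set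
`X ⊆ ℝ^N` that is the closure of its interior, conformal contractions
`f0 i = f_i` and `f i j = f_{i,j}` mapping `X` into `X`, with disjoint images of the
interior of `X`, derivative norms strictly between `λ₁` and `λ₂`, and the
bounded distortion assumption with exponent `α`. -/
structure PreGDMS (q N : ℕ) where
  hq : 0 < q
  /-- transition matrix of zeros and ones -/
  A : Fin q → Fin q → Bool
  /-- the subshift is transitive -/
  trans : ∀ a b : Fin q, ∃ n : ℕ, 0 < n ∧ ∃ w : ℕ → Fin q,
    w 0 = a ∧ w n = b ∧ ∀ k < n, A (w k) (w (k+1)) = true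
  X : Set (Euc N)
  Xcompact : IsCompact X
  Xnonempty : X.Nonempty
  Xregular : X = closure (interior X)
  f0 : Fin q → Euc N → Euc N
  f : Fin q → Fin q → Euc N → Euc N
  f0maps : ∀ i, Set.MapsTo (f0 i) X X
  fmaps : ∀ i j, A i j = true → Set.MapsTo (f i j) X X
  conformal0 : ∀ i, ∀ x ∈ X, DifferentiableAt ℝ (f0 i) x ∧ IsConformalMap (fderiv ℝ (f0 i) x)
  conformal1 : ∀ i j, A i j = true → ∀ x ∈ X,
    DifferentiableAt ℝ (f i j) x ∧ IsConformalMap (fderiv ℝ (f i j) x)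
  lam1 : ℝ
  lam2 : ℝ
  lam1pos : 0 < lam1
  lam1lt : lam1 < lam2
  lam2lt : lam2 < 1
  derivBound0 : ∀ i, ∀ x ∈ X, lam1 < ‖fderiv ℝ (f0 i) x‖ ∧ ‖fderiv ℝ (f0 i) x‖ < lam2
  derivBound1 : ∀ i j, A i j = true → ∀ x ∈ X,
    lam1 < ‖fderiv ℝ (f i j) x‖ ∧ ‖fderiv ℝ (f i j) x‖ < lam2
  disjoint00 : ∀ i i', i ≠ i' → Disjoint (f0 i '' interior X) (f0 i' '' interior X)
  disjoint01 : ∀ i i' j', A i' j' = true →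
    Disjoint (f0 i '' interior X) (f i' j' '' interior X)
  disjoint11 : ∀ i j i' j', A i j = true → A i' j' = true → (i, j) ≠ (i', j') →
    Disjoint (f i j '' interior X) (f i' j' '' interior X)
  alpha : ℝ
  alphapos : 0 < alpha
  distortion0 : ∀ i, ∀ x ∈ X, ∀ y ∈ X,
    |‖fderiv ℝ (f0 i) x‖ - ‖fderiv ℝ (f0 i) y‖| ≤
      (sSup ((fun z => ‖(fderiv ℝ (f0 i) z).inverse‖) '' X))⁻¹ * ‖x - y‖ ^ alpha
  distortion1 : ∀ i j, A i j = true → ∀ x ∈ X, ∀ y ∈ X,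
    |‖fderiv ℝ (f i j) x‖ - ‖fderiv ℝ (f i j) y‖| ≤
      (sSup ((fun z => ‖(fderiv ℝ (f i j) z).inverse‖) '' X))⁻¹ * ‖x - y‖ ^ alpha

namespace PreGDMS

variable {q N : ℕ}

/-- The subshift of finite type `Σ_A`, with the product (subspace) topology. -/
def SigmaA (S : PreGDMS q N) : Type := {x : ℕ → Fin q // ∀ n, S.A (x n) (x (n+1)) = true}

instance (S : PreGDMS q N) : TopologicalSpace S.SigmaA :=
  inferInstanceAs (TopologicalSpace {x : ℕ → Fin q // ∀ n, S.A (x n) (x (n+1)) = true})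

/-- The shift map `σ` on `Σ_A`. -/
def shift (S : PreGDMS q N) (x : S.SigmaA) : S.SigmaA :=
  ⟨fun n => x.val (n+1), fun n => x.prop (n+1)⟩

/-- The cylinder `C_{w}` determined by a finite word `w`; its generation is the
length of `w`. -/
def cyl (S : PreGDMS q N) (w : List (Fin q)) : Set S.SigmaA :=
  {x | ∀ k : Fin w.length, x.val k = w.get k}

/-- `comp x n` is the composition `f_{x₀} ∘ f_{x₀,x₁} ∘ ⋯ ∘ f_{x_{n−1},x_n}`. -/
def comp (S : PreGDMS q N) (x : ℕ → Fin q) : ℕ → Euc N → Euc N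
  | 0 => S.f0 (x 0)
  | n + 1 => (S.comp x n) ∘ S.f (x n) (x (n+1))

/-- The metric `d_Σ(i,j) = 2^{−n}` where `n ≥ 1` is the first position at which the
sequences `i` and `j` differ (and `d_Σ(i,i) = 0`). -/
def dSig (S : PreGDMS q N) (x y : S.SigmaA) : ℝ :=
  letI := Classical.dec (x = y)
  if x = y then 0 else (2 : ℝ)⁻¹ ^ (sInf {n : ℕ | x.val n ≠ y.val n} + 1)

end PreGDMS

/-- A conformal graph directed Markov system: the data of a `PreGDMS` together with
the coding map `π : Σ_A → X`, characterized by
`{π(x)} = ⋂ₙ f_{x₀} ∘ f_{x₀,x₁} ∘ ⋯ ∘ f_{x_{n−1},x_n}(X)`. -/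
structure GDMS (q N : ℕ) extends PreGDMS q N where
  pi : toPreGDMS.SigmaA → Euc N
  hpi : ∀ x : toPreGDMS.SigmaA,
    (⋂ n : ℕ, toPreGDMS.comp x.val n '' toPreGDMS.X) = {pi x}

namespace GDMS

variable {q N : ℕ}

/-- The limit set `Λ_A = π(Σ_A)`. -/
def limitSet (S : GDMS q N) : Set (Euc N) := Set.range S.pi

/-- `d(C)`: the diameter of `π(C)`. -/
def dC (S : GDMS q N) (C : Set S.SigmaA) : ℝ≥0∞ := EMetric.diam (S.pi '' C)

/-- The outer measure `M_∞^t` on subsets of `Σ_A`: infimum of `∑ d(Cᵢ)^t` over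
countable covers by cylinders. -/
def Minf (S : GDMS q N) (t : ℝ) (E : Set S.SigmaA) : ℝ≥0∞ :=
  ⨅ (c : ℕ → List (Fin q)) (_ : ∀ n, c n ≠ []) (_ : E ⊆ ⋃ n, S.cyl (c n)),
    ∑' n, S.dC (S.cyl (c n)) ^ t

/-- The outer measure `𝔐_∞^t` on subsets of `ℝ^N`: infimum of `∑ |π(Cᵢ)|^t` over
countable covers by projections of cylinders. -/
def MfrakInf (S : GDMS q N) (t : ℝ) (B : Set (Euc N)) : ℝ≥0∞ :=
  ⨅ (c : ℕ → List (Fin q)) (_ : ∀ n, c n ≠ []) (_ : B ⊆ ⋃ n, S.pi '' S.cyl (c n)),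
    ∑' n, EMetric.diam (S.pi '' S.cyl (c n)) ^ t

/-- The outer measure `N_∞^{m,t}`: as `M_∞^t` but using only covers by cylinders
whose generation is a positive multiple of `m`. -/
def Ninf (S : GDMS q N) (m : ℕ) (t : ℝ) (E : Set S.SigmaA) : ℝ≥0∞ :=
  ⨅ (c : ℕ → List (Fin q)) (_ : ∀ n, c n ≠ [] ∧ m ∣ (c n).length)
    (_ : E ⊆ ⋃ n, S.cyl (c n)),
    ∑' n, S.dC (S.cyl (c n)) ^ t

/-- The class `𝒢^t(Σ_A)`: `G_δ` sets `F ⊆ Σ_A` with `M_∞^t(F ∩ C) = M_∞^t(C)` for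
every cylinder `C`. -/
def memGSigma (S : GDMS q N) (t : ℝ) (F : Set S.SigmaA) : Prop :=
  IsGδ F ∧ ∀ w : List (Fin q), w ≠ [] → S.Minf t (F ∩ S.cyl w) = S.Minf t (S.cyl w)

/-- The class `𝒢^t(Λ_A)`: `G_δ` sets `F ⊆ Λ_A` with `𝔐_∞^t(F ∩ π(C)) = 𝔐_∞^t(π(C))`
for every cylinder `C`. -/
def memGLambda (S : GDMS q N) (t : ℝ) (F : Set (Euc N)) : Prop :=
  F ⊆ S.limitSet ∧ IsGδ F ∧ ∀ w : List (Fin q), w ≠ [] →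
    S.MfrakInf t (F ∩ S.pi '' S.cyl w) = S.MfrakInf t (S.pi '' S.cyl w)

/-- The Birkhoff (ergodic) average `(1/n) ∑_{k=0}^{n−1} g(σ^k x)`. -/
def birk (S : GDMS q N) (g : S.SigmaA → ℝ) (x : S.SigmaA) (n : ℕ) : ℝ :=
  (∑ k ∈ Finset.range n, g (S.shift^[k] x)) / n

/-- `G_g(p)`: the set of `x ∈ Σ_A` such that `p` is an accumulation point of the
sequence of ergodic averages of `g` at `x`. -/
def Gset (S : GDMS q N) (g : S.SigmaA → ℝ) (p : ℝ) : Set S.SigmaA :=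
  {x | MapClusterPt p atTop (S.birk g x)}

/-- `G_g(p, M, ε) = {x ∈ Σ_A : p − ε < (1/M) ∑_{k=0}^{M−1} g(σ^k x) < p + ε}`. -/
def GsetApprox (S : GDMS q N) (g : S.SigmaA → ℝ) (p : ℝ) (M : ℕ) (ε : ℝ) : Set S.SigmaA :=
  {x | p - ε < S.birk g x M ∧ S.birk g x M < p + ε}

end GDMS

end

/-!
`M_∞^t` is an outer measure built from cylinders, which are clopen subsets of the compact space
`Σ_A` and are either nested or disjoint. Three facts follow.

* If `M_∞^t(G ∩ C) = M_∞^t(C)` for every cylinder `C`, the same holds for every open `U`: write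
  `U` as a union of cylinders `C_d` with pairwise incomparable words `d`. In a cover of `G ∩ U`,
  keep the cylinders containing some `C_d`; every other `C_d` meets only covering cylinders
  inside it, and these can be traded for `C_d` at no cost.
* `M_∞^t(U) = sup {M_∞^t(K) : K ⊆ U clopen}` for open `U` (increasing sets lemma): the covers of
  the partial unions of the `C_d`, normalized as above, have an ultrafilter limit covering `U`
  at no higher cost.
* For decreasing closed sets, compactness makes every cylinder cover of the intersection a cover
  of one of the sets.

Write `⋂ F_i = ⋂ O_m` with `O_m` open, each containing some `F_i`. Given `r < M_∞^t(U)`, the first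
two facts produce clopen sets `K_{m+1} ⊆ O_m ∩ K_m` (with `K_0 = U`) of content `> r`, and the
third passes to the intersection.
-/

theorem ENNReal.tsum_setOf_eventually_mem_le {ι α : Type*} (𝒰 : Ultrafilter ι)
    (B : ι → Set α) (f : α → ℝ≥0∞) {c : ℝ≥0∞} (h : ∀ i, ∑' a : B i, f a ≤ c) :
    ∑' a : {a | ∀ᶠ i in 𝒰, a ∈ B i}, f a ≤ c := by
  classical
  rw [tsum_subtype, ENNReal.tsum_eq_iSup_sum]
  refine iSup_le fun s => ?_
  have hagree : ∀ᶠ i in 𝒰, ∀ a ∈ s,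
      (a ∈ {a | ∀ᶠ i in 𝒰, a ∈ B i} ↔ a ∈ B i) := by
    refine (Filter.eventually_all_finset s).2 fun a _ => ?_
    rcases 𝒰.em (a ∈ B ·) with ha | ha
    · filter_upwards [ha] with i hi using iff_of_true ha hi
    · filter_upwards [ha] with i hi using iff_of_false (Ultrafilter.eventually_not.1 ha) hi
  obtain ⟨i, hi⟩ := hagree.exists
  calc ∑ a ∈ s, {a | ∀ᶠ i in 𝒰, a ∈ B i}.indicator f a
      = ∑ a ∈ s, (B i).indicator f a := Finset.sum_congr rfl fun a ha => by
        rw [Set.indicator_apply, Set.indicator_apply, if_congr (hi a ha) rfl rfl]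
    _ ≤ ∑' a, (B i).indicator f a := ENNReal.sum_le_tsum s
    _ = ∑' a : B i, f a := (tsum_subtype _ _).symm
    _ ≤ c := h i

namespace PreGDMS

variable {q N : ℕ} (S : PreGDMS q N)

def initWord (x : S.SigmaA) (n : ℕ) : List (Fin q) := Stream'.take n x.val

@[simp] theorem length_initWord (x : S.SigmaA) (n : ℕ) : (S.initWord x n).length = n :=
  Stream'.length_take _ _

theorem initWord_prefix_initWord (x : S.SigmaA) {m n : ℕ} (h : m ≤ n) :
    S.initWord x m <+: S.initWord x n := by
  have : (S.initWord x n).take m = S.initWord x m := by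
    have := Stream'.take_take (s := x.val) (m := m) (n := n)
    rwa [min_eq_right h] at this
  exact this ▸ List.take_prefix _ _

theorem getElem_initWord (x : S.SigmaA) {n k : ℕ} (hk : k < (S.initWord x n).length) :
    (S.initWord x n)[k] = x.val k := by
  have h : (S.initWord x n)[k]? = some (x.val k) :=
    Stream'.getElem?_take (by simpa using hk)
  rw [List.getElem?_eq_getElem hk] at h
  exact Option.some_injective _ h

theorem mem_cyl_iff {w : List (Fin q)} {x : S.SigmaA} :
    x ∈ S.cyl w ↔ S.initWord x w.length = w :=
  ⟨fun hx => List.ext_getElem (by simp) fun k hk hk' =>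
      (S.getElem_initWord x hk).trans (hx ⟨k, hk'⟩),
    fun hx k => (S.getElem_initWord x (by simp)).symm.trans (List.getElem_of_eq hx _)⟩

theorem mem_cyl_initWord (x : S.SigmaA) (n : ℕ) : x ∈ S.cyl (S.initWord x n) := by
  rw [mem_cyl_iff, length_initWord]

theorem prefix_or_prefix_of_mem_cyl {v w : List (Fin q)} {x : S.SigmaA}
    (hv : x ∈ S.cyl v) (hw : x ∈ S.cyl w) : v <+: w ∨ w <+: v := by
  rw [mem_cyl_iff] at hv hw
  rcases le_total v.length w.length with h | h
  · exact .inl (hv ▸ hw ▸ S.initWord_prefix_initWord x h)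
  · exact .inr (hv ▸ hw ▸ S.initWord_prefix_initWord x h)

theorem cyl_subset_cyl {v w : List (Fin q)} (h : v <+: w) : S.cyl w ⊆ S.cyl v := by
  intro x hx
  rw [mem_cyl_iff] at hx ⊢
  have := S.initWord_prefix_initWord x h.length_le
  rw [hx] at this
  exact (List.prefix_of_prefix_length_le this h (by simp)).eq_of_length (by simp)

theorem isClopen_cyl (w : List (Fin q)) : IsClopen (S.cyl w) := by
  have : S.cyl w = ⋂ k : Fin w.length, (fun x : S.SigmaA => x.val k) ⁻¹' {w.get k} := by
    ext; simp [cyl]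
  rw [this]
  exact isClopen_iInter_of_finite fun k =>
    (isClopen_discrete _).preimage ((continuous_apply _).comp continuous_induced_dom)

instance : CompactSpace S.SigmaA := by
  have : IsClosed {x : ℕ → Fin q | ∀ n, S.A (x n) (x (n+1)) = true} := by
    simp only [Set.ofPred_forall]
    refine isClosed_iInter fun n => isClosed_eq ?_ continuous_const
    have hpair : Continuous fun x : ℕ → Fin q => (x n, x (n+1)) :=
      (continuous_apply n).prodMk (continuous_apply (n+1))
    exact (continuous_of_discreteTopology (f := fun p : Fin q × Fin q => S.A p.1 p.2)).comp hpair
  exact isCompact_iff_compactSpace.mp this.isCompact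

theorem exists_cyl_initWord_subset {U : Set S.SigmaA} (hU : IsOpen U) {x : S.SigmaA}
    (hx : x ∈ U) : ∃ n, 0 < n ∧ S.cyl (S.initWord x n) ⊆ U := by
  obtain ⟨V, hV, rfl⟩ := isOpen_induced_iff.mp hU
  obtain ⟨I, u, hu, hsub⟩ := isOpen_pi_iff.mp hV x.val hx
  refine ⟨I.sup id + 1, Nat.succ_pos _, fun y hy => hsub fun a ha => ?_⟩
  have ha' : a < (S.initWord x (I.sup id + 1)).length := by
    simpa [Nat.lt_succ_iff] using Finset.le_sup (f := id) ha
  have hya : y.val a = x.val a := (hy ⟨a, ha'⟩).trans (S.getElem_initWord x ha')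
  exact hya ▸ (hu a ha).2

theorem exists_antichain_cover_of_isOpen {V : Set S.SigmaA} (hV : IsOpen V) :
    ∃ D : Set (List (Fin q)), IsAntichain (· <+: ·) D ∧ (∀ d ∈ D, d ≠ []) ∧
      V = ⋃ d ∈ D, S.cyl d := by
  classical
  set D := {w : List (Fin q) | w ≠ [] ∧ S.cyl w ⊆ V ∧
    ∀ v, v <+: w → v ≠ [] → S.cyl v ⊆ V → v = w}
  refine ⟨D, fun a ha b hb hab hprefix => hab (hb.2.2 a hprefix ha.1 ha.2.1),
    fun d hd => hd.1, subset_antisymm (fun x hx => ?_) (iUnion₂_subset fun d hd => hd.2.1)⟩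
  have hex := S.exists_cyl_initWord_subset hV hx
  refine mem_iUnion₂.mpr ⟨S.initWord x (Nat.find hex), ⟨?_, (Nat.find_spec hex).2, ?_⟩,
    S.mem_cyl_initWord x _⟩
  · rw [← List.length_pos_iff, length_initWord]
    exact (Nat.find_spec hex).1
  · intro v hv hv0 hvV
    have hxv : S.initWord x v.length = v :=
      S.mem_cyl_iff.mp (S.cyl_subset_cyl hv (S.mem_cyl_initWord x _))
    refine hv.eq_of_length (le_antisymm (by simpa using hv.length_le) ?_)
    rw [length_initWord]
    exact Nat.find_min' hex ⟨List.length_pos_iff.mpr hv0, by rwa [hxv]⟩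

theorem comp_congr {a b : ℕ → Fin q} {n : ℕ} (h : ∀ k ≤ n, a k = b k) :
    S.comp a n = S.comp b n := by
  induction n with
  | zero => simp only [comp, h 0 le_rfl]
  | succ n ih =>
    simp only [comp, ih fun k hk => h k (hk.trans n.le_succ), h n n.le_succ, h (n+1) le_rfl]

theorem comp_eq_of_mem_cyl {x y : S.SigmaA} {n : ℕ} (hy : y ∈ S.cyl (S.initWord x (n+1))) :
    S.comp y.val n = S.comp x.val n :=
  S.comp_congr fun k hk => by
    have hk' : k < (S.initWord x (n+1)).length := by simpa [Nat.lt_succ_iff] using hk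
    exact (hy ⟨k, hk'⟩).trans (S.getElem_initWord x hk')

theorem continuousOn_comp (x : S.SigmaA) (n : ℕ) : ContinuousOn (S.comp x.val n) S.X := by
  induction n with
  | zero => exact fun y hy => ((S.conformal0 _ y hy).1.continuousAt).continuousWithinAt
  | succ n ih =>
    refine ih.comp (fun y hy => ?_) (S.fmaps _ _ (x.prop n))
    exact ((S.conformal1 _ _ (x.prop n) y hy).1.continuousAt).continuousWithinAt

theorem image_comp_succ_subset (x : S.SigmaA) (n : ℕ) :
    S.comp x.val (n+1) '' S.X ⊆ S.comp x.val n '' S.X := by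
  rw [comp, Set.image_comp]
  exact Set.image_mono (S.fmaps _ _ (x.prop n)).image_subset

end PreGDMS

namespace GDMS

variable {q N : ℕ} (S : GDMS q N)

theorem exists_dC_cyl_initWord_le (x : S.SigmaA) {ρ : ℝ≥0∞} (hρ : 0 < ρ) :
    ∃ n, S.dC (S.cyl (S.initWord x (n+1))) ≤ ρ := by
  have hcompact : ∀ n, IsCompact (S.comp x.val n '' S.X) := fun n =>
    S.Xcompact.image_of_continuousOn (S.continuousOn_comp x n)
  have hball : ∀ y ∈ ⋂ n, S.comp x.val n '' S.X, Metric.eball (S.pi x) (ρ/2) ∈ 𝓝 y := by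
    intro y hy
    rw [S.hpi x, mem_singleton_iff] at hy
    exact hy ▸ Metric.eball_mem_nhds _ (ENNReal.half_pos hρ.ne')
  obtain ⟨n, hn⟩ := exists_subset_nhds_of_isCompact'
    (antitone_nat_of_succ_le (S.image_comp_succ_subset x)).directed_ge hcompact
    (fun n => (hcompact n).isClosed) hball
  refine ⟨n, ?_⟩
  have himage : S.pi '' S.cyl (S.initWord x (n+1)) ⊆ Metric.eball (S.pi x) (ρ/2) := by
    rintro _ ⟨y, hy, rfl⟩
    have hy' : S.pi y ∈ ⋂ n, S.comp y.val n '' S.X := S.hpi y ▸ rfl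
    exact hn (S.comp_eq_of_mem_cyl hy ▸ mem_iInter.mp hy' n)
  calc S.dC (S.cyl (S.initWord x (n+1))) ≤ Metric.ediam (Metric.eball (S.pi x) (ρ/2)) :=
        Metric.ediam_mono himage
    _ ≤ 2 * (ρ/2) := Metric.ediam_eball_le
    _ = ρ := ENNReal.mul_div_cancel two_ne_zero ENNReal.ofNat_ne_top

theorem exists_ne_nil_dC_rpow_le {t : ℝ} (ht : 0 < t) {η : ℝ≥0∞} (hη : 0 < η) :
    ∃ w : List (Fin q), w ≠ [] ∧ S.dC (S.cyl w) ^ t ≤ η := by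
  rcases isEmpty_or_nonempty S.SigmaA with hempty | ⟨⟨x⟩⟩
  · refine ⟨[⟨0, S.hq⟩], List.cons_ne_nil _ _, ?_⟩
    have hdC : S.dC (S.cyl [⟨0, S.hq⟩]) = 0 := by
      rw [dC, Set.eq_empty_of_isEmpty (S.cyl _), image_empty]
      exact Metric.ediam_empty
    simp [hdC, ENNReal.zero_rpow_of_pos ht]
  · have hρ : 0 < min η 1 ^ t⁻¹ :=
      ENNReal.rpow_pos (lt_min hη one_pos) (min_lt_of_right_lt ENNReal.one_lt_top).ne
    obtain ⟨n, hn⟩ := S.exists_dC_cyl_initWord_le x hρ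
    refine ⟨S.initWord x (n+1), by simp [← List.length_pos_iff], ?_⟩
    calc S.dC (S.cyl (S.initWord x (n+1))) ^ t ≤ (min η 1 ^ t⁻¹) ^ t :=
          ENNReal.rpow_le_rpow hn ht.le
      _ = min η 1 := by rw [← ENNReal.rpow_mul, inv_mul_cancel₀ ht.ne', ENNReal.rpow_one]
      _ ≤ η := min_le_left _ _

theorem Minf_le_tsum_of_subset_iUnion {t : ℝ} {E : Set S.SigmaA} {c : ℕ → List (Fin q)}
    (hc : ∀ n, c n ≠ []) (hE : E ⊆ ⋃ n, S.cyl (c n)) :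
    S.Minf t E ≤ ∑' n, S.dC (S.cyl (c n)) ^ t :=
  iInf₂_le_of_le c hc (iInf_le _ hE)

theorem exists_cover_of_Minf_lt {t : ℝ} {E : Set S.SigmaA} {r : ℝ≥0∞} (h : S.Minf t E < r) :
    ∃ c : ℕ → List (Fin q), (∀ n, c n ≠ []) ∧ E ⊆ ⋃ n, S.cyl (c n) ∧
      ∑' n, S.dC (S.cyl (c n)) ^ t < r := by
  simpa only [Minf, iInf_lt_iff, exists_prop] using h

theorem exists_tsum_dC_rpow_le {t : ℝ} (ht : 0 < t) {ε : ℝ≥0∞} (hε : ε ≠ 0) :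
    ∃ c : ℕ → List (Fin q), (∀ n, c n ≠ []) ∧ ∑' n, S.dC (S.cyl (c n)) ^ t ≤ ε := by
  obtain ⟨ε', hε'pos, hε'sum⟩ := ENNReal.exists_pos_sum_of_countable' hε ℕ
  choose c hc hcost using fun n => S.exists_ne_nil_dC_rpow_le ht (hε'pos n)
  exact ⟨c, hc, (ENNReal.tsum_le_tsum hcost).trans hε'sum.le⟩

theorem Minf_empty {t : ℝ} (ht : 0 < t) : S.Minf t ∅ = 0 := by
  refine le_antisymm (ENNReal.le_of_forall_pos_le_add fun ε hε _ => ?_) bot_le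
  obtain ⟨c, hc, hsum⟩ := S.exists_tsum_dC_rpow_le ht (ENNReal.coe_ne_zero.mpr hε.ne')
  exact (S.Minf_le_tsum_of_subset_iUnion hc (empty_subset _)).trans
    (hsum.trans_eq (zero_add _).symm)

theorem Minf_mono {t : ℝ} {E E' : Set S.SigmaA} (h : E ⊆ E') : S.Minf t E ≤ S.Minf t E' :=
  le_iInf₂ fun _ hc => le_iInf fun hE' => S.Minf_le_tsum_of_subset_iUnion hc (h.trans hE')

theorem Minf_iUnion_le {t : ℝ} (s : ℕ → Set S.SigmaA) :
    S.Minf t (⋃ n, s n) ≤ ∑' n, S.Minf t (s n) := by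
  refine ENNReal.le_of_forall_pos_le_add fun ε hε hlt => ?_
  obtain ⟨ε', hε'pos, hε'sum⟩ := ENNReal.exists_pos_sum_of_countable'
    (ENNReal.coe_ne_zero.mpr hε.ne') ℕ
  have hfin : ∀ n, S.Minf t (s n) ≠ ⊤ := ENNReal.ne_top_of_tsum_ne_top hlt.ne
  choose c hc hcover hsum using fun n =>
    S.exists_cover_of_Minf_lt (ENNReal.lt_add_right (hfin n) (hε'pos n).ne')
  let e : ℕ ≃ ℕ × ℕ := (Denumerable.eqv (ℕ × ℕ)).symm
  have hcover' : ⋃ n, s n ⊆ ⋃ m, S.cyl (c (e m).1 (e m).2) := by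
    refine iUnion_subset fun n x hx => ?_
    obtain ⟨k, hk⟩ := mem_iUnion.mp (hcover n hx)
    exact mem_iUnion.mpr ⟨e.symm (n, k), by simpa using hk⟩
  calc S.Minf t (⋃ n, s n) ≤ ∑' m, S.dC (S.cyl (c (e m).1 (e m).2)) ^ t :=
        S.Minf_le_tsum_of_subset_iUnion (fun m => hc _ _) hcover'
    _ = ∑' n, ∑' k, S.dC (S.cyl (c n k)) ^ t := by
        rw [e.tsum_eq (fun p => S.dC (S.cyl (c p.1 p.2)) ^ t),
          ENNReal.tsum_prod (f := fun n k => S.dC (S.cyl (c n k)) ^ t)]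
    _ ≤ ∑' n, (S.Minf t (s n) + ε' n) := ENNReal.tsum_le_tsum fun n => (hsum n).le
    _ ≤ ∑' n, S.Minf t (s n) + ε := by
        rw [ENNReal.tsum_add]
        exact add_le_add le_rfl hε'sum.le

noncomputable def minfOuterMeasure {t : ℝ} (ht : 0 < t) : MeasureTheory.OuterMeasure S.SigmaA where
  measureOf := S.Minf t
  empty := S.Minf_empty ht
  mono := S.Minf_mono
  iUnion_nat s _ := S.Minf_iUnion_le s

theorem Minf_cyl_le_dC_rpow {t : ℝ} (ht : 0 < t) {w : List (Fin q)} (hw : w ≠ []) :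
    S.Minf t (S.cyl w) ≤ S.dC (S.cyl w) ^ t := by
  refine ENNReal.le_of_forall_pos_le_add fun ε hε _ => ?_
  obtain ⟨p, hp, hsum⟩ := S.exists_tsum_dC_rpow_le ht (ENNReal.coe_ne_zero.mpr hε.ne')
  let c : ℕ → List (Fin q) := fun n => Nat.casesOn n w p
  calc S.Minf t (S.cyl w) ≤ ∑' n, S.dC (S.cyl (c n)) ^ t :=
        S.Minf_le_tsum_of_subset_iUnion (fun n => n.casesOn hw hp) (subset_iUnion (S.cyl ∘ c) 0)
    _ = S.dC (S.cyl w) ^ t + ∑' n, S.dC (S.cyl (p n)) ^ t := tsum_eq_zero_add' ENNReal.summable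
    _ ≤ S.dC (S.cyl w) ^ t + ε := add_le_add le_rfl hsum

theorem Minf_le_tsum_of_subset_biUnion {t : ℝ} (ht : 0 < t) {E : Set S.SigmaA}
    {B : Set (List (Fin q))} (hE : E ⊆ ⋃ b ∈ B, S.cyl b) :
    S.Minf t E ≤ ∑' b : B, S.Minf t (S.cyl b) :=
  (S.Minf_mono hE).trans
    (MeasureTheory.measure_biUnion_le (S.minfOuterMeasure ht) B.to_countable _)

theorem Minf_eq_iInf_tsum {t : ℝ} (ht : 0 < t) (E : Set S.SigmaA) :
    S.Minf t E = ⨅ (B : Set (List (Fin q))) (_ : E ⊆ ⋃ b ∈ B, S.cyl b),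
      ∑' b : B, S.Minf t (S.cyl b) := by
  refine le_antisymm (le_iInf₂ fun B hB => S.Minf_le_tsum_of_subset_biUnion ht hB)
    (le_iInf₂ fun c hc => le_iInf fun hE => iInf₂_le_of_le (range c) (by rwa [biUnion_range]) ?_)
  calc ∑' b : range c, S.Minf t (S.cyl b) ≤ ∑' n, S.Minf t (S.cyl (c n)) :=
        ENNReal.tsum_le_tsum_comp_of_surjective rangeFactorization_surjective _
    _ ≤ ∑' n, S.dC (S.cyl (c n)) ^ t :=
        ENNReal.tsum_le_tsum fun n => S.Minf_cyl_le_dC_rpow ht (hc n)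

theorem exists_prefix_cover_tsum_le {t : ℝ} (ht : 0 < t) {D : Set (List (Fin q))}
    (hD : IsAntichain (· <+: ·) D) {G : Set S.SigmaA}
    (hG : ∀ d ∈ D, S.Minf t (S.cyl d) ≤ S.Minf t (G ∩ S.cyl d)) {B : Set (List (Fin q))}
    (hB : G ∩ ⋃ d ∈ D, S.cyl d ⊆ ⋃ b ∈ B, S.cyl b) :
    ∃ B' : Set (List (Fin q)), (∀ d ∈ D, ∃ p ∈ B', p <+: d) ∧
      ∑' b : B', S.Minf t (S.cyl b) ≤ ∑' b : B, S.Minf t (S.cyl b) := by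
  set μ : List (Fin q) → ℝ≥0∞ := fun w => S.Minf t (S.cyl w)
  set Bpre := {b ∈ B | ∃ d ∈ D, b <+: d}
  set Dfree := {d ∈ D | ∀ b ∈ B, ¬ b <+: d}
  refine ⟨Bpre ∪ Dfree, fun d hd => ?_, ?_⟩
  · by_cases h : ∃ b ∈ B, b <+: d
    · obtain ⟨b, hb, hbd⟩ := h
      exact ⟨b, .inl ⟨hb, d, hd, hbd⟩, hbd⟩
    · exact ⟨d, .inr ⟨hd, fun b hb hbd => h ⟨b, hb, hbd⟩⟩, List.prefix_refl d⟩
  have hfree : ∀ d ∈ Dfree, μ d ≤ ∑' b : {b ∈ B | d <+: b}, μ b := by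
    intro d hd
    refine (hG d hd.1).trans ((S.Minf_mono fun x hx => ?_).trans
      (MeasureTheory.measure_biUnion_le (S.minfOuterMeasure ht) (to_countable _) _))
    obtain ⟨b, hb, hxb⟩ := mem_iUnion₂.mp (hB ⟨hx.1, mem_iUnion₂.mpr ⟨d, hd.1, hx.2⟩⟩)
    refine mem_iUnion₂.mpr ⟨b, ⟨hb, ?_⟩, hxb⟩
    exact (S.prefix_or_prefix_of_mem_cyl hx.2 hxb).resolve_right (hd.2 b hb)
  let toB (p : Σ d : Dfree, {b ∈ B | d.1 <+: b}) : ↥(B \ Bpre) :=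
    ⟨p.2, p.2.2.1, fun ⟨_, d', hd', hbd'⟩ => p.1.2.2 p.2 p.2.2.1
      (hD.eq p.1.2.1 hd' (p.2.2.2.trans hbd') ▸ hbd')⟩
  have htoB : Function.Injective toB := by
    rintro ⟨⟨d, hd⟩, ⟨b, hb⟩⟩ ⟨⟨d', hd'⟩, ⟨b', hb'⟩⟩ h
    obtain rfl : b = b' := congrArg Subtype.val h
    obtain rfl : d = d' := (List.prefix_or_prefix_of_prefix hb.2 hb'.2).elim
      (hD.eq hd.1 hd'.1) (hD.eq' hd.1 hd'.1)
    rfl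
  calc ∑' b : ↥(Bpre ∪ Dfree), μ b ≤ ∑' b : Bpre, μ b + ∑' d : Dfree, μ d :=
        ENNReal.tsum_union_le _ _ _
    _ ≤ ∑' b : Bpre, μ b + ∑' d : Dfree, ∑' b : {b ∈ B | d.1 <+: b}, μ b :=
        add_le_add le_rfl (ENNReal.tsum_le_tsum fun d => hfree d d.2)
    _ = ∑' b : Bpre, μ b + ∑' p : Σ d : Dfree, {b ∈ B | d.1 <+: b}, μ p.2 := by
        rw [ENNReal.tsum_sigma']
    _ ≤ ∑' b : Bpre, μ b + ∑' b : ↥(B \ Bpre), μ b :=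
        add_le_add le_rfl (ENNReal.tsum_comp_le_tsum_of_injective htoB fun b => μ b)
    _ = ∑' b : B, μ b := by
        rw [← Summable.tsum_union_disjoint disjoint_sdiff_right ENNReal.summable
          ENNReal.summable, union_sdiff_cancel (sep_subset _ _)]

theorem Minf_inter_eq_of_isOpen {t : ℝ} (ht : 0 < t) {G : Set S.SigmaA}
    (hG : ∀ w : List (Fin q), w ≠ [] → S.Minf t (G ∩ S.cyl w) = S.Minf t (S.cyl w))
    {V : Set S.SigmaA} (hV : IsOpen V) : S.Minf t (G ∩ V) = S.Minf t V := by
  refine le_antisymm (S.Minf_mono inter_subset_right) ?_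
  obtain ⟨D, hD, hD0, rfl⟩ := S.exists_antichain_cover_of_isOpen hV
  rw [S.Minf_eq_iInf_tsum ht (G ∩ _)]
  refine le_iInf₂ fun B hB => ?_
  obtain ⟨B', hB'D, hB'⟩ :=
    S.exists_prefix_cover_tsum_le ht hD (fun d hd => (hG d (hD0 d hd)).ge) hB
  refine le_trans (S.Minf_le_tsum_of_subset_biUnion ht (iUnion₂_subset fun d hd => ?_)) hB'
  obtain ⟨p, hp, hpd⟩ := hB'D d hd
  exact (S.cyl_subset_cyl hpd).trans (subset_biUnion_of_mem (u := S.cyl) hp)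

theorem exists_prefix_cover_tsum_lt {t : ℝ} (ht : 0 < t) {D : Set (List (Fin q))}
    (hD : IsAntichain (· <+: ·) D) {c : ℝ≥0∞} (hc : S.Minf t (⋃ d ∈ D, S.cyl d) < c) :
    ∃ B : Set (List (Fin q)), (∀ d ∈ D, ∃ p ∈ B, p <+: d) ∧
      ∑' b : B, S.Minf t (S.cyl b) < c := by
  rw [S.Minf_eq_iInf_tsum ht] at hc
  simp only [iInf_lt_iff, exists_prop] at hc
  obtain ⟨B, hB, hBc⟩ := hc
  obtain ⟨B', hB'D, hB'⟩ := S.exists_prefix_cover_tsum_le ht (G := univ) hD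
    (fun d _ => by rw [univ_inter]) ((univ_inter _).trans_subset hB)
  exact ⟨B', hB'D, hB'.trans_lt hBc⟩

theorem exists_isClopen_subset_lt_Minf {t : ℝ} (ht : 0 < t) {V : Set S.SigmaA}
    (hV : IsOpen V) {r : ℝ≥0∞} (hr : r < S.Minf t V) :
    ∃ K, IsClopen K ∧ K ⊆ V ∧ r < S.Minf t K := by
  by_contra! hK
  obtain ⟨c, hrc, hcV⟩ := exists_between hr
  obtain ⟨D, hD, -, rfl⟩ := S.exists_antichain_cover_of_isOpen hV
  have hcover : ∀ n, ∃ B : Set (List (Fin q)), (∀ d ∈ {d ∈ D | d.length ≤ n}, ∃ p ∈ B, p <+: d) ∧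
      ∑' b : B, S.Minf t (S.cyl b) < c := fun n =>
    have hfin : {d ∈ D | d.length ≤ n}.Finite :=
      (List.finite_length_le _ n).subset fun d hd => hd.2
    S.exists_prefix_cover_tsum_lt ht (hD.subset (sep_subset _ _))
      ((hK _ (hfin.isClopen_biUnion fun d _ => S.isClopen_cyl d)
        (biUnion_subset_biUnion_left fun d hd => hd.1)).trans_lt hrc)
  choose B hBD hBc using hcover
  let 𝒰 : Ultrafilter ℕ := Ultrafilter.of atTop
  have hlim : ⋃ d ∈ D, S.cyl d ⊆ ⋃ b ∈ {b | ∀ᶠ n in 𝒰, b ∈ B n}, S.cyl b := by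
    refine iUnion₂_subset fun d hd => ?_
    -- `B n` contains a prefix of `d` once `n ≥ d.length`, and `d` has finitely many prefixes
    have hev : ⋃ p ∈ {p | p ∈ d.inits}, {n | p ∈ B n} ∈ 𝒰 := by
      filter_upwards [Ultrafilter.of_le atTop (eventually_ge_atTop d.length)] with n hn
      obtain ⟨p, hp, hpd⟩ := hBD n d ⟨hd, hn⟩
      exact mem_iUnion₂.mpr ⟨p, (List.mem_inits _ _).mpr hpd, hp⟩
    obtain ⟨p, hpd, hp⟩ := (Ultrafilter.finite_biUnion_mem_iff (List.finite_toSet _)).mp hev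
    exact (S.cyl_subset_cyl ((List.mem_inits _ _).mp hpd)).trans
      (subset_biUnion_of_mem (u := S.cyl) (show p ∈ {b | ∀ᶠ n in 𝒰, b ∈ B n} from hp))
  refine hcV.not_ge ((S.Minf_le_tsum_of_subset_biUnion ht hlim).trans ?_)
  exact ENNReal.tsum_setOf_eventually_mem_le 𝒰 B (fun b => S.Minf t (S.cyl b)) fun n => (hBc n).le

theorem le_Minf_iInter_of_antitone {t : ℝ} {K : ℕ → Set S.SigmaA} (hK : ∀ m, IsClosed (K m))
    (hanti : Antitone K) {r : ℝ≥0∞} (hr : ∀ m, r ≤ S.Minf t (K m)) :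
    r ≤ S.Minf t (⋂ m, K m) := by
  refine le_iInf₂ fun c hc => le_iInf fun hcover => ?_
  have hopen : IsOpen (⋃ n, S.cyl (c n)) := isOpen_iUnion fun n => (S.isClopen_cyl _).isOpen
  obtain ⟨m, hm⟩ := exists_subset_nhds_of_isCompact' hanti.directed_ge
    (fun m => (hK m).isCompact) hK fun x hx => hopen.mem_nhds (hcover hx)
  exact (hr m).trans (S.Minf_le_tsum_of_subset_iUnion hc hm)

theorem Minf_iInter_inter_eq {t : ℝ} (ht : 0 < t) {O : ℕ → Set S.SigmaA}
    (hO : ∀ m, IsOpen (O m))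
    (hfull : ∀ m, ∀ w : List (Fin q), w ≠ [] → S.Minf t (O m ∩ S.cyl w) = S.Minf t (S.cyl w))
    {U : Set S.SigmaA} (hU : IsOpen U) : S.Minf t ((⋂ m, O m) ∩ U) = S.Minf t U := by
  refine le_antisymm (S.Minf_mono inter_subset_right)
    (le_of_forall_lt_imp_le_of_dense fun r hr => ?_)
  have hstep : ∀ m K, IsOpen K → r < S.Minf t K →
      ∃ K', IsClopen K' ∧ K' ⊆ O m ∩ K ∧ r < S.Minf t K' := fun m K hK hrK =>
    S.exists_isClopen_subset_lt_Minf ht ((hO m).inter hK)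
      (by rwa [S.Minf_inter_eq_of_isOpen ht (hfull m) hK])
  choose! next hnext using hstep
  let L : ℕ → Set S.SigmaA := fun m => Nat.rec U (fun m K => next m K) m
  have hL : ∀ m, IsOpen (L m) ∧ r < S.Minf t (L m) := by
    intro m
    induction m with
    | zero => exact ⟨hU, hr⟩
    | succ m ih => exact ⟨(hnext m _ ih.1 ih.2).1.isOpen, (hnext m _ ih.1 ih.2).2.2⟩
  have hLsucc : ∀ m, IsClopen (L (m+1)) ∧ L (m+1) ⊆ O m ∩ L m ∧ r < S.Minf t (L (m+1)) :=
    fun m => hnext m _ (hL m).1 (hL m).2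
  calc r ≤ S.Minf t (⋂ m, L (m+1)) :=
        S.le_Minf_iInter_of_antitone (fun m => (hLsucc m).1.isClosed)
          (antitone_nat_of_succ_le fun m => (hLsucc (m+1)).2.1.trans inter_subset_right)
          fun m => (hLsucc m).2.2.le
    _ ≤ S.Minf t ((⋂ m, O m) ∩ U) := S.Minf_mono fun x hx =>
        ⟨mem_iInter.mpr fun m => ((hLsucc m).2.1 (mem_iInter.mp hx m)).1,
          ((hLsucc 0).2.1 (mem_iInter.mp hx 0)).2⟩

end GDMS

theorem inter_of_memGSigma_general {q N : ℕ} (S : GDMS q N) (t : ℝ) (ht : 0 < t)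
    (F : ℕ → Set S.SigmaA) (hF : ∀ i, S.memGSigma t (F i)) :
    (∀ U : Set S.SigmaA, IsOpen U → S.Minf t ((⋂ i, F i) ∩ U) = S.Minf t U) ∧
    S.memGSigma t (⋂ i, F i) := by
  choose V hVopen hFV using fun i => (hF i).1.eq_iInter_nat
  obtain ⟨g, hg⟩ := exists_surjective_nat (ℕ × ℕ)
  have hinter : ⋂ i, F i = ⋂ m, V (g m).1 (g m).2 := by
    rw [hg.iInter_comp (fun p => V p.1 p.2)]
    ext x
    simp [hFV]
  have hfull : ∀ m, ∀ w : List (Fin q), w ≠ [] →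
      S.Minf t (V (g m).1 (g m).2 ∩ S.cyl w) = S.Minf t (S.cyl w) := fun m w hw =>
    le_antisymm (S.Minf_mono inter_subset_right) ((hF (g m).1).2 w hw ▸
      S.Minf_mono (inter_subset_inter_left _ (hFV _ ▸ iInter_subset _ _)))
  have hopen : ∀ U : Set S.SigmaA, IsOpen U → S.Minf t ((⋂ i, F i) ∩ U) = S.Minf t U :=
    fun U hU => hinter ▸ S.Minf_iInter_inter_eq ht (fun m => hVopen _ _) hfull hU
  exact ⟨hopen, .iInter fun i => (hF i).1, fun w _ => hopen _ (S.isClopen_cyl w).isOpen⟩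

/-- For `0 < t ≤ dim_H Λ_A`, if `F_i ∈ 𝒢^t(Σ_A)` for all `i ∈ ℕ`,
then `M_∞^t((⋂ i, F_i) ∩ U) = M_∞^t(U)` for every open `U ⊆ Σ_A`; in particular
`⋂ i, F_i ∈ 𝒢^t(Σ_A)`. -/
theorem inter_of_memGSigma {q N : ℕ} (S : GDMS q N) (t : ℝ) (ht : 0 < t)
    (ht' : ENNReal.ofReal t ≤ dimH S.limitSet)
    (F : ℕ → Set S.SigmaA) (hF : ∀ i, S.memGSigma t (F i)) :
    (∀ U : Set S.SigmaA, IsOpen U → S.Minf t ((⋂ i, F i) ∩ U) = S.Minf t U) ∧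
    S.memGSigma t (⋂ i, F i) :=
  inter_of_memGSigma_general S t ht F hF
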